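/- arXiv:2509.16576 — 3 statements merged into one kernel-verified Lean document; each statement's English description precedes it below -/
import Mathlib

section
/- Let 0 < μ̂ ≤ L̂, α = 4/(√L̂ + √μ̂)², κ̂ = √(L̂/μ̂), β = ((κ̂−1)/(κ̂+1))². Then for every s ∈ [μ̂, L̂], the discriminant (1+β−αs)² − 4β ≤ 0. -/
/-!
With `a = √μ̂` and `b = √L̂` one has `κ̂ = b / a`, so `β = ((b - a) / (b + a))²` and
`α = 4 / (a + b)²`. The discriminant is then a quadratic in `s` with leading coefficient
`α² > 0` whose roots are exactly `a² = μ̂` and `b² = L̂`: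
it equals `16 (a² - s)(b² - s) / (a + b)⁴`, which is nonpositive between the roots.
-/

lemma div_sub_one_div_div_add_one {a b : ℝ} (ha : a ≠ 0) :
    (b / a - 1) / (b / a + 1) = (b - a) / (b + a) := by
  rw [div_sub_one ha, div_add_one ha, div_div_div_cancel_right₀ ha]

lemma momentum_discriminant_eq {a b : ℝ} (hab : a + b ≠ 0) (s : ℝ) :
    (1 + ((b - a) / (b + a)) ^ 2 - 4 / (a + b) ^ 2 * s) ^ 2 - 4 * ((b - a) / (b + a)) ^ 2 =
      16 * ((a ^ 2 - s) * (b ^ 2 - s)) / (a + b) ^ 4 := by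
  have hba : b + a ≠ 0 := by rwa [add_comm]
  field_simp
  ring

lemma momentum_discriminant_nonpos {a b s : ℝ} (hs : s ∈ Set.Icc (a ^ 2) (b ^ 2)) :
    16 * ((a ^ 2 - s) * (b ^ 2 - s)) / (a + b) ^ 4 ≤ 0 := by
  have hprod : (a ^ 2 - s) * (b ^ 2 - s) ≤ 0 :=
    mul_nonpos_of_nonpos_of_nonneg (sub_nonpos.2 hs.1) (sub_nonneg.2 hs.2)
  exact div_nonpos_of_nonpos_of_nonneg (by linarith) (by positivity)

theorem discriminant_nonpos_on_interval (muh Lh : ℝ) (hmu : 0 < muh) (hL : muh ≤ Lh)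
    (α κ β : ℝ)
    (hα : α = 4 / (Real.sqrt Lh + Real.sqrt muh) ^ 2)
    (hκ : κ = Real.sqrt (Lh / muh))
    (hβ : β = ((κ - 1) / (κ + 1)) ^ 2) :
    ∀ s ∈ Set.Icc muh Lh, (1 + β - α * s) ^ 2 - 4 * β ≤ 0 := by
  intro s hs
  have hLh : 0 ≤ Lh := hmu.le.trans hL
  have ha : 0 < Real.sqrt muh := Real.sqrt_pos.2 hmu
  have hβ' : β = ((Real.sqrt Lh - Real.sqrt muh) / (Real.sqrt Lh + Real.sqrt muh)) ^ 2 := by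
    rw [hβ, hκ, Real.sqrt_div hLh, div_sub_one_div_div_add_one ha.ne']
  have hα' : α = 4 / (Real.sqrt muh + Real.sqrt Lh) ^ 2 := by rw [hα, add_comm]
  rw [hα', hβ', momentum_discriminant_eq (by positivity)]
  apply momentum_discriminant_nonpos
  rwa [Real.sq_sqrt hmu.le, Real.sq_sqrt hLh]
end

section
/- With α = 4/(√L̂+√μ̂)² and β = ((κ̂−1)/(κ̂+1))², κ̂ = √(L̂/μ̂), if every eigenvalue σ² of A^TA lies in [μ̂, L̂], then the spectral radius of the iteration matrix H = [[I−αA^TA, −√(αβ)A^T],[√(αβ)A, βI]] equals √β = 1 − 2/(κ̂+1). -/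
open Matrix

lemma det_aux {n : ℕ} (G : Matrix (Fin n) (Fin n) ℝ) (hG : G.IsHermitian) (x y : ℂ) :
    (x • (1 : Matrix (Fin n) (Fin n) ℂ) + y • G.map Complex.ofReal).det
      = ∏ i, (x + y * (hG.eigenvalues i : ℂ)) := by
  classical
  set U : Matrix (Fin n) (Fin n) ℝ := (hG.eigenvectorUnitary : Matrix (Fin n) (Fin n) ℝ) with hU
  have hUU : U * star U = 1 := mem_unitaryGroup_iff.mp hG.eigenvectorUnitary.2
  have hUU' : star U * U = 1 := mem_unitaryGroup_iff'.mp hG.eigenvectorUnitary.2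
  set f : ℝ →+* ℂ := Complex.ofRealHom with hf
  set V : Matrix (Fin n) (Fin n) ℂ := U.map f with hV
  set W : Matrix (Fin n) (Fin n) ℂ := (star U).map f with hW
  have hVW : V * W = 1 := by
    rw [hV, hW, ← Matrix.map_mul, hUU, Matrix.map_one _ f.map_zero f.map_one]
  have hWV : W * V = 1 := by
    rw [hV, hW, ← Matrix.map_mul, hUU', Matrix.map_one _ f.map_zero f.map_one]
  have hDmap : (Matrix.diagonal (RCLike.ofReal ∘ hG.eigenvalues) : Matrix (Fin n) (Fin n) ℝ).map f
      = Matrix.diagonal (fun i => (hG.eigenvalues i : ℂ)) := by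
    rw [Matrix.diagonal_map f.map_zero]
    congr 1
  have hGmap : G.map Complex.ofReal
      = V * Matrix.diagonal (fun i => (hG.eigenvalues i : ℂ)) * W := by
    conv_lhs => rw [hG.spectral_theorem]
    show ((U * _ * star U).map f) = _
    rw [Matrix.map_mul, Matrix.map_mul, hDmap]
  have key : x • (1 : Matrix (Fin n) (Fin n) ℂ) + y • G.map Complex.ofReal
      = V * (x • 1 + y • Matrix.diagonal (fun i => (hG.eigenvalues i : ℂ))) * W := by
    rw [Matrix.mul_add, Matrix.add_mul, hGmap]
    congr 1
    · rw [Matrix.mul_smul, Matrix.smul_mul, Matrix.mul_one, hVW]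
    · rw [Matrix.mul_smul, Matrix.smul_mul]
  rw [key, Matrix.det_mul, Matrix.det_mul, mul_comm, ← mul_assoc, mul_comm (W.det),
    ← Matrix.det_mul, hVW, Matrix.det_one, one_mul]
  have hmid : x • (1 : Matrix (Fin n) (Fin n) ℂ)
        + y • Matrix.diagonal (fun i => (hG.eigenvalues i : ℂ))
      = Matrix.diagonal (fun i => x + y * (hG.eigenvalues i : ℂ)) := by
    ext i j
    by_cases h : i = j
    · subst h; simp [Matrix.one_apply_eq, mul_comm]
    · simp [Matrix.diagonal_apply_ne _ h, Matrix.one_apply_ne h]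
  rw [hmid, Matrix.det_diagonal]

lemma quad_aux (β c : ℝ) (hβ0 : 0 ≤ β) (hd : (1 + β - c) ^ 2 ≤ 4 * β) (lam : ℂ)
    (hlam : (lam - (β : ℂ)) * (lam - 1) + (c : ℂ) * lam = 0) :
    ‖lam‖ = Real.sqrt β := by
  set x := lam.re with hx
  set y := lam.im with hy
  have e1 : ((lam - (β : ℂ)) * (lam - 1) + (c : ℂ) * lam).re = 0 := by rw [hlam]; rfl
  have e2 : ((lam - (β : ℂ)) * (lam - 1) + (c : ℂ) * lam).im = 0 := by rw [hlam]; rfl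
  simp only [Complex.add_re, Complex.add_im, Complex.mul_re, Complex.mul_im, Complex.sub_re,
    Complex.sub_im, Complex.ofReal_re, Complex.ofReal_im, Complex.one_re, Complex.one_im,
    ← hx, ← hy] at e1 e2
  have hns : Complex.normSq lam = β := by
    rw [Complex.normSq_apply, ← hx, ← hy]
    by_cases hy0 : y = 0
    · rw [hy0] at e1 ⊢
      nlinarith [e1, hd, sq_nonneg (2 * x - (1 + β - c))]
    · have h5 : y * (2 * x - (1 + β - c)) = 0 := by linear_combination e2
      have h6 : 2 * x - (1 + β - c) = 0 := by
        rcases mul_eq_zero.mp h5 with h | h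
        · exact absurd h hy0
        · exact h
      linear_combination x * h6 - e1
  rw [Complex.norm_def, hns]

lemma root_aux (β c : ℝ) (hd : (1 + β - c) ^ 2 ≤ 4 * β) :
    ∃ lam : ℂ, (lam - (β : ℂ)) * (lam - 1) + (c : ℂ) * lam = 0 := by
  obtain ⟨b, hb⟩ : ∃ b : ℝ, b = 1 + β - c := ⟨_, rfl⟩
  rw [← hb] at hd
  have hyb : 0 ≤ β - b ^ 2 / 4 := by linarith
  refine ⟨⟨b / 2, Real.sqrt (β - b ^ 2 / 4)⟩, ?_⟩
  have hy2 : Real.sqrt (β - b ^ 2 / 4) ^ 2 = β - b ^ 2 / 4 := Real.sq_sqrt hyb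
  apply Complex.ext
  · simp only [Complex.add_re, Complex.mul_re, Complex.sub_re, Complex.sub_im, Complex.ofReal_re,
      Complex.ofReal_im, Complex.one_re, Complex.one_im, Complex.zero_re]
    linear_combination (b / 2) * hb - hy2
  · simp only [Complex.add_im, Complex.mul_im, Complex.sub_re, Complex.sub_im, Complex.ofReal_re,
      Complex.ofReal_im, Complex.one_re, Complex.one_im, Complex.zero_im]
    linear_combination Real.sqrt (β - b ^ 2 / 4) * hb

lemma hHmap_aux {n : ℕ} (α β : ℝ) (A : Matrix (Fin n) (Fin n) ℝ) :
    (fromBlocks (1 - α • (Aᵀ * A)) ((-Real.sqrt (α * β)) • Aᵀ)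
        (Real.sqrt (α * β) • A) (β • (1 : Matrix (Fin n) (Fin n) ℝ))).map Complex.ofReal
      = fromBlocks (1 - (α : ℂ) • ((Aᵀ * A).map Complex.ofReal))
          ((-(Real.sqrt (α * β) : ℝ) : ℂ) • (A.map Complex.ofReal)ᵀ)
          ((Real.sqrt (α * β) : ℂ) • A.map Complex.ofReal) ((β : ℂ) • 1) := by
  ext i j
  rcases i with i | i <;> rcases j with j | j <;>
    simp [Matrix.map_apply, Matrix.sub_apply, Matrix.smul_apply, Matrix.one_apply,
      apply_ite Complex.ofReal]

lemma charblock_aux {n : ℕ} (α β : ℝ) (A : Matrix (Fin n) (Fin n) ℝ) (lam : ℂ) :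
    lam • (1 : Matrix (Fin n ⊕ Fin n) (Fin n ⊕ Fin n) ℂ)
        - fromBlocks (1 - (α : ℂ) • ((Aᵀ * A).map Complex.ofReal))
          ((-(Real.sqrt (α * β) : ℝ) : ℂ) • (A.map Complex.ofReal)ᵀ)
          ((Real.sqrt (α * β) : ℂ) • A.map Complex.ofReal) ((β : ℂ) • 1)
      = fromBlocks (lam • 1 - (1 - (α : ℂ) • ((Aᵀ * A).map Complex.ofReal)))
          ((Real.sqrt (α * β) : ℂ) • (A.map Complex.ofReal)ᵀ)
          (-((Real.sqrt (α * β) : ℂ) • A.map Complex.ofReal)) ((lam - β) • 1) := by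
  rw [← Matrix.fromBlocks_one, Matrix.fromBlocks_smul, sub_eq_add_neg, Matrix.fromBlocks_neg,
    Matrix.fromBlocks_add]
  simp [sub_eq_add_neg, sub_smul, neg_smul, add_smul]

lemma det_block {n : ℕ} (α β : ℝ) (hαβ : 0 ≤ α * β) (A : Matrix (Fin n) (Fin n) ℝ)
    (hG : (Aᵀ * A).IsHermitian) (lam : ℂ) (hlam : lam ≠ (β : ℂ)) :
    (fromBlocks (lam • 1 - (1 - (α : ℂ) • ((Aᵀ * A).map Complex.ofReal)))
          ((Real.sqrt (α * β) : ℂ) • (A.map Complex.ofReal)ᵀ)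
          (-((Real.sqrt (α * β) : ℂ) • A.map Complex.ofReal)) ((lam - β) • 1)).det
      = ∏ i, ((lam - β) * (lam - 1) + ((α * hG.eigenvalues i : ℝ) : ℂ) * lam) := by
  have hne : lam - (β : ℂ) ≠ 0 := sub_ne_zero.mpr hlam
  have hinv1 : ((lam - (β : ℂ)) • (1 : Matrix (Fin n) (Fin n) ℂ))
      * ((lam - (β : ℂ))⁻¹ • 1) = 1 := by
    rw [Matrix.smul_mul, Matrix.mul_smul, Matrix.mul_one, smul_smul,
      mul_inv_cancel₀ hne, one_smul]
  have hinv2 : ((lam - (β : ℂ))⁻¹ • (1 : Matrix (Fin n) (Fin n) ℂ))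
      * ((lam - (β : ℂ)) • 1) = 1 := by
    rw [Matrix.smul_mul, Matrix.mul_smul, Matrix.mul_one, smul_smul,
      inv_mul_cancel₀ hne, one_smul]
  haveI : Invertible ((lam - (β : ℂ)) • (1 : Matrix (Fin n) (Fin n) ℂ)) :=
    ⟨(lam - (β : ℂ))⁻¹ • 1, hinv2, hinv1⟩
  rw [Matrix.det_fromBlocks₂₂, invOf_eq_right_inv hinv1]
  have hG' : (Aᵀ * A).map Complex.ofReal
      = (A.map Complex.ofReal)ᵀ * (A.map Complex.ofReal) := by
    show (Aᵀ * A).map ⇑Complex.ofRealHom = _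
    rw [Matrix.map_mul]
    congr 1
  have hprod : ((Real.sqrt (α * β) : ℂ) • (A.map Complex.ofReal)ᵀ) * ((lam - (β : ℂ))⁻¹ • 1)
        * (-((Real.sqrt (α * β) : ℂ) • A.map Complex.ofReal))
      = -((((α : ℂ) * (β : ℂ) * (lam - (β : ℂ))⁻¹)) • ((Aᵀ * A).map Complex.ofReal)) := by
    have hgen : ∀ (c d e : ℂ) (M N : Matrix (Fin n) (Fin n) ℂ),
        (c • M) * (d • 1) * (e • N) = (c * (d * e)) • (M * N) := by
      intro c d e M N
      rw [Matrix.mul_smul, Matrix.mul_smul, Matrix.mul_one, Matrix.smul_mul, Matrix.smul_mul,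
        smul_smul, smul_smul]
      congr 1
      ring
    rw [hG', Matrix.mul_neg, hgen]
    congr 2
    have h2 : ((Real.sqrt (α * β) : ℝ) : ℂ) * ((Real.sqrt (α * β) : ℝ) : ℂ)
        = ((α : ℝ) : ℂ) * ((β : ℝ) : ℂ) := by
      rw [← Complex.ofReal_mul, Real.mul_self_sqrt hαβ, Complex.ofReal_mul]
    linear_combination (lam - (β : ℂ))⁻¹ * h2
  rw [hprod, sub_neg_eq_add]
  have hco : (α : ℂ) + (α : ℂ) * (β : ℂ) * (lam - (β : ℂ))⁻¹
      = (α : ℂ) * lam * (lam - (β : ℂ))⁻¹ := by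
    field_simp
    ring
  have hschur : lam • (1 : Matrix (Fin n) (Fin n) ℂ) - (1 - (α : ℂ) • ((Aᵀ * A).map Complex.ofReal))
        + (((α : ℂ) * (β : ℂ) * (lam - (β : ℂ))⁻¹)) • ((Aᵀ * A).map Complex.ofReal)
      = (lam - 1) • 1 + ((α : ℂ) * lam * (lam - (β : ℂ))⁻¹) • ((Aᵀ * A).map Complex.ofReal) := by
    rw [← hco, add_smul]
    module
  rw [hschur, det_aux _ hG, Matrix.det_smul, Matrix.det_one, mul_one, Fintype.card_fin]
  have hfac : ∀ i : Fin n, (lam - (β : ℂ))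
        * (lam - 1 + (α : ℂ) * lam * (lam - (β : ℂ))⁻¹ * (hG.eigenvalues i : ℂ))
      = (lam - (β : ℂ)) * (lam - 1) + ((α * hG.eigenvalues i : ℝ) : ℂ) * lam := by
    intro i
    push_cast
    field_simp
  rw [show ((lam - (β : ℂ))) ^ n = ∏ _i : Fin n, (lam - (β : ℂ)) by
    rw [Finset.prod_const, Finset.card_univ, Fintype.card_fin], ← Finset.prod_mul_distrib]
  exact Finset.prod_congr rfl fun i _ => hfac i

theorem spectral_radius_momentum_matrix (n : ℕ) (hn : 0 < n)
    (A : Matrix (Fin n) (Fin n) ℝ) (hA : IsUnit A)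
    (muh Lh : ℝ) (hmu : 0 < muh) (hL : muh ≤ Lh)
    (α κ β : ℝ)
    (hα : α = 4 / (Real.sqrt Lh + Real.sqrt muh) ^ 2)
    (hκ : κ = Real.sqrt (Lh / muh))
    (hβ : β = ((κ - 1) / (κ + 1)) ^ 2)
    (hG : (Aᵀ * A).IsHermitian)
    (heig : ∀ i, hG.eigenvalues i ∈ Set.Icc muh Lh)
    (H : Matrix (Fin n ⊕ Fin n) (Fin n ⊕ Fin n) ℝ)
    (hH : H = fromBlocks (1 - α • (Aᵀ * A)) ((-Real.sqrt (α * β)) • Aᵀ)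
        (Real.sqrt (α * β) • A) (β • 1)) :
    (∀ lam : ℂ,
        (lam • (1 : Matrix (Fin n ⊕ Fin n) (Fin n ⊕ Fin n) ℂ) - H.map Complex.ofReal).det = 0 →
        ‖lam‖ = Real.sqrt β) ∧
    (∃ lam : ℂ,
        (lam • (1 : Matrix (Fin n ⊕ Fin n) (Fin n ⊕ Fin n) ℂ) - H.map Complex.ofReal).det = 0 ∧
        ‖lam‖ = Real.sqrt β) ∧
    Real.sqrt β = 1 - 2 / (κ + 1) := by
  classical
  have hL0 : 0 < Lh := lt_of_lt_of_le hmu hL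
  have hsm : 0 < Real.sqrt muh := Real.sqrt_pos.mpr hmu
  have hsl : 0 < Real.sqrt Lh := Real.sqrt_pos.mpr hL0
  have hsm2 : Real.sqrt muh ^ 2 = muh := Real.sq_sqrt hmu.le
  have hsl2 : Real.sqrt Lh ^ 2 = Lh := Real.sq_sqrt hL0.le
  have hsmsl : Real.sqrt muh ≤ Real.sqrt Lh := Real.sqrt_le_sqrt hL
  have hκ' : κ = Real.sqrt Lh / Real.sqrt muh := by
    rw [hκ, Real.sqrt_div hL0.le]
  have hκ1 : 1 ≤ κ := by
    rw [hκ']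
    exact (one_le_div hsm).mpr hsmsl
  have hκp : (0:ℝ) < κ + 1 := by linarith
  have hsβ : Real.sqrt β = (κ - 1) / (κ + 1) := by
    rw [hβ]
    exact Real.sqrt_sq (div_nonneg (by linarith) hκp.le)
  have hthird : Real.sqrt β = 1 - 2 / (κ + 1) := by
    rw [hsβ]
    field_simp
    ring
  have hβ0 : 0 ≤ β := hβ ▸ sq_nonneg _
  have hα0 : 0 < α := by
    rw [hα]
    positivity
  have hαβ : 0 ≤ α * β := mul_nonneg hα0.le hβ0
  have hslm : 0 < Real.sqrt Lh + Real.sqrt muh := by linarith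
  have hsβ' : Real.sqrt β = (Real.sqrt Lh - Real.sqrt muh) / (Real.sqrt Lh + Real.sqrt muh) := by
    rw [hsβ, hκ']
    field_simp
  have hαμ : α * muh = (1 - Real.sqrt β) ^ 2 := by
    rw [hα, hsβ']
    field_simp
    linarith [hsm2]
  have hαL : α * Lh = (1 + Real.sqrt β) ^ 2 := by
    rw [hα, hsβ']
    field_simp
    linarith [hsl2]
  have hdisc : ∀ i : Fin n, (1 + β - α * hG.eigenvalues i) ^ 2 ≤ 4 * β := by
    intro i
    obtain ⟨h1, h2⟩ := heig i
    have h3 : (1 - Real.sqrt β) ^ 2 ≤ α * hG.eigenvalues i := by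
      rw [← hαμ]
      exact mul_le_mul_of_nonneg_left h1 hα0.le
    have h4 : α * hG.eigenvalues i ≤ (1 + Real.sqrt β) ^ 2 := by
      rw [← hαL]
      exact mul_le_mul_of_nonneg_left h2 hα0.le
    have hb2 : Real.sqrt β ^ 2 = β := Real.sq_sqrt hβ0
    nlinarith [Real.sqrt_nonneg β, h3, h4]
  -- determinant identity
  have hdetne : ∀ lam : ℂ, lam ≠ (β : ℂ) →
      (lam • (1 : Matrix (Fin n ⊕ Fin n) (Fin n ⊕ Fin n) ℂ) - H.map Complex.ofReal).det
        = ∏ i, ((lam - β) * (lam - 1) + ((α * hG.eigenvalues i : ℝ) : ℂ) * lam) := by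
    intro lam hlam
    rw [hH, hHmap_aux, charblock_aux, det_block α β hαβ A hG lam hlam]
  have hdet : ∀ lam : ℂ,
      (lam • (1 : Matrix (Fin n ⊕ Fin n) (Fin n ⊕ Fin n) ℂ) - H.map Complex.ofReal).det
        = ∏ i, ((lam - β) * (lam - 1) + ((α * hG.eigenvalues i : ℝ) : ℂ) * lam) := by
    have hc1 : Continuous fun lam : ℂ =>
        (lam • (1 : Matrix (Fin n ⊕ Fin n) (Fin n ⊕ Fin n) ℂ) - H.map Complex.ofReal).det :=
      Continuous.matrix_det ((continuous_id.smul continuous_const).sub continuous_const)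
    have hc2 : Continuous fun lam : ℂ =>
        ∏ i, ((lam - (β : ℂ)) * (lam - 1) + ((α * hG.eigenvalues i : ℝ) : ℂ) * lam) := by
      apply continuous_finset_prod
      intro i _
      exact ((continuous_id.sub continuous_const).mul (continuous_id.sub continuous_const)).add
        (continuous_const.mul continuous_id)
    have heqon : Set.EqOn _ _ ({(β : ℂ)}ᶜ : Set ℂ) := fun lam hlam =>
      hdetne lam (by simpa [Set.mem_compl_iff] using hlam)
    have := Continuous.ext_on (dense_compl_singleton ((β : ℝ) : ℂ)) hc1 hc2 heqon
    exact fun lam => congrFun this lam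
  refine ⟨?_, ?_, hthird⟩
  · intro lam h
    rw [hdet lam] at h
    obtain ⟨i, -, hzero⟩ := Finset.prod_eq_zero_iff.mp h
    exact quad_aux β (α * hG.eigenvalues i) hβ0 (hdisc i) lam hzero
  · obtain ⟨lam, hroot⟩ := root_aux β (α * hG.eigenvalues ⟨0, hn⟩) (hdisc ⟨0, hn⟩)
    refine ⟨lam, ?_, quad_aux β (α * hG.eigenvalues ⟨0, hn⟩) hβ0 (hdisc ⟨0, hn⟩) lam hroot⟩
    rw [hdet lam]
    exact Finset.prod_eq_zero (Finset.mem_univ (⟨0, hn⟩ : Fin n)) hroot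
end

section
/- For an invertible square matrix A, the steady state of the transformed momentum iteration satisfies (I − H)^{-1} F = [(1−β)(A^TA)^{-1}A^Tb ; √(αβ) A (A^TA)^{-1}A^Tb], and when A is invertible the second block equals √(αβ)·b. -/
/-!
With `s = √(αβ)`, the matrix `I - H` is `[[α AᵀA, s Aᵀ], [-s A, (1 - β) I]]`. For any solution `u`
of the normal equations `AᵀA u = Aᵀb`, the vector `((1 - β) u, s A u)` is mapped by it to
`(α(1 - β) Aᵀb + s² Aᵀb, 0) = (α Aᵀb, 0) = F`, so it is `(I - H)⁻¹ F`. When `A` is invertible,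
`u = (AᵀA)⁻¹Aᵀb = A⁻¹b`, hence `A u = b`.
-/

open Matrix

namespace Matrix

variable {m n R : Type*} [Fintype n] [DecidableEq n] [CommRing R]

omit [Fintype n] in
theorem one_sub_fromBlocks [DecidableEq m] (A : Matrix n n R) (B : Matrix n m R)
    (C : Matrix m n R) (D : Matrix m m R) :
    1 - fromBlocks A B C D = fromBlocks (1 - A) (-B) (-C) (1 - D) := by
  rw [← fromBlocks_one, sub_eq_add_neg, fromBlocks_neg, fromBlocks_add]
  simp only [sub_eq_add_neg, zero_add]

theorem transpose_mul_mulVec_inv_mulVec [Fintype m] {A : Matrix m n R} (hA : IsUnit (Aᵀ * A))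
    (b : m → R) : (Aᵀ * A) *ᵥ ((Aᵀ * A)⁻¹ *ᵥ (Aᵀ *ᵥ b)) = Aᵀ *ᵥ b := by
  rw [mulVec_mulVec, mul_nonsing_inv _ ((isUnit_iff_isUnit_det _).mp hA), one_mulVec]

theorem mulVec_inv_transpose_mul_mulVec_transpose {A : Matrix n n R} (hA : IsUnit A)
    (b : n → R) : A *ᵥ ((Aᵀ * A)⁻¹ *ᵥ (Aᵀ *ᵥ b)) = b := by
  let := hA.invertible
  rw [mul_inv_rev, mulVec_mulVec, mulVec_mulVec, ← Matrix.mul_assoc, mul_inv_of_invertible,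
    Matrix.one_mul, inv_mul_of_invertible, one_mulVec]

theorem one_sub_momentum_mulVec_eq [Fintype m] [DecidableEq m] {A : Matrix m n R} {b : m → R}
    {u : n → R} (hu : (Aᵀ * A) *ᵥ u = Aᵀ *ᵥ b) {α β s : R} (hs : s * s = α * β) :
    (1 - fromBlocks (1 - α • (Aᵀ * A)) ((-s) • Aᵀ) (s • A) (β • 1)) *ᵥ
        Sum.elim ((1 - β) • u) (s • (A *ᵥ u)) = Sum.elim (α • (Aᵀ *ᵥ b)) 0 := by
  rw [one_sub_fromBlocks, fromBlocks_mulVec, Sum.elim_comp_inl, Sum.elim_comp_inr]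
  rw [← mulVec_mulVec] at hu
  congr 1
  · simp only [sub_sub_cancel, neg_smul, neg_neg, smul_mulVec, mulVec_smul, ← mulVec_mulVec, hu]
    linear_combination (norm := module) hs • (Aᵀ *ᵥ b)
  · simp only [sub_mulVec, neg_mulVec, smul_mulVec, mulVec_smul, one_mulVec]
    module

end Matrix

theorem mag_steady_state_general (n : ℕ) (A : Matrix (Fin n) (Fin n) ℝ)
    (b : Fin n → ℝ) (α β : ℝ) (hα : 0 < α) (hβ0 : 0 < β)
    (hA : IsUnit A)
    (H : Matrix (Fin n ⊕ Fin n) (Fin n ⊕ Fin n) ℝ)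
    (hH : H = fromBlocks (1 - α • (Aᵀ * A)) ((-Real.sqrt (α * β)) • Aᵀ)
        (Real.sqrt (α * β) • A) (β • 1))
    (F : Fin n ⊕ Fin n → ℝ)
    (hF : F = Sum.elim (α • (Aᵀ *ᵥ b)) 0)
    (hinv : IsUnit (1 - H)) :
    (1 - H)⁻¹ *ᵥ F =
      Sum.elim ((1 - β) • ((Aᵀ * A)⁻¹ *ᵥ (Aᵀ *ᵥ b)))
        (Real.sqrt (α * β) • (A *ᵥ ((Aᵀ * A)⁻¹ *ᵥ (Aᵀ *ᵥ b)))) ∧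
    Real.sqrt (α * β) • (A *ᵥ ((Aᵀ * A)⁻¹ *ᵥ (Aᵀ *ᵥ b))) =
      Real.sqrt (α * β) • b := by
  refine ⟨?_, by rw [mulVec_inv_transpose_mul_mulVec_transpose hA]⟩
  have hATA : IsUnit (Aᵀ * A) := ((isUnit_transpose A).mpr hA).mul hA
  have hsqrt : √(α * β) * √(α * β) = α * β := Real.mul_self_sqrt (by positivity)
  let := hinv.invertible
  subst hH hF
  exact inv_mulVec_eq_vec
    (one_sub_momentum_mulVec_eq (transpose_mul_mulVec_inv_mulVec hATA b) hsqrt).symm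

theorem mag_steady_state (n : ℕ) (A : Matrix (Fin n) (Fin n) ℝ)
    (b : Fin n → ℝ) (α β : ℝ) (hα : 0 < α) (hβ0 : 0 < β) (hβ1 : β < 1)
    (hA : IsUnit A)
    (H : Matrix (Fin n ⊕ Fin n) (Fin n ⊕ Fin n) ℝ)
    (hH : H = fromBlocks (1 - α • (Aᵀ * A)) ((-Real.sqrt (α * β)) • Aᵀ)
        (Real.sqrt (α * β) • A) (β • 1))
    (F : Fin n ⊕ Fin n → ℝ)
    (hF : F = Sum.elim (α • (Aᵀ *ᵥ b)) 0)
    (hinv : IsUnit (1 - H)) :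
    (1 - H)⁻¹ *ᵥ F =
      Sum.elim ((1 - β) • ((Aᵀ * A)⁻¹ *ᵥ (Aᵀ *ᵥ b)))
        (Real.sqrt (α * β) • (A *ᵥ ((Aᵀ * A)⁻¹ *ᵥ (Aᵀ *ᵥ b)))) ∧
    Real.sqrt (α * β) • (A *ᵥ ((Aᵀ * A)⁻¹ *ᵥ (Aᵀ *ᵥ b))) =
      Real.sqrt (α * β) • b :=
  mag_steady_state_general n A b α β hα hβ0 hA H hH F hF hinv
end
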